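/- Set γ = βb/βs, k1 = (βs/βb)·(−δ2)/(1 − δ2) and k4 = (δ1/(δ1 − 1))·(βb/βs), and define, for positive reals r < s, F1(r,s) = [(1 − δ2)·s^{1−δ1} + δ2·r^{−δ1}]/(δ1 − δ2) + γ·[δ2·s^{−δ1} + (1 − δ2)·r^{1−δ1}]/(δ1 − δ2) − k4^{1−δ1}/δ1 and F2(r,s) = [(1 − δ1)·s^{1−δ2} + δ1·r^{−δ2}]/(δ1 − δ2) + γ·[δ1·s^{−δ2} + (1 − δ1)·r^{1−δ2}]/(δ1 − δ2) − γ·k1^{1−δ2}/(−δ2). Then the pair (k1, k4) solves this system: F1(k1, k4) = 0 and F2(k1, k4) = 0. -/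

import Mathlib

/-!
The exponents δ1 > 1 > 0 > δ2 are the roots of `x ^ 2 - b x - e` with
`b = 1 + (μ1 - μ2)/λ` and `e = (ρ - μ1)/λ`; this quadratic is negative at `0` and at `1`.
After splitting `t ^ (1 - δ) = t ^ (-δ) * t`, each equation is linear in the two
unknown powers `k1 ^ (-δ)` and `k4 ^ (-δ)`, and both coefficients vanish precisely because
`k1` and `k4` satisfy the linear relations `γ (1 - δ2) k1 = -δ2` and `(δ1 - 1) k4 = δ1 γ`.
-/

theorem sub_sqrt_sq_add_div_two_neg {b e : ℝ} (he : 0 < e) : (b - √(b ^ 2 + 4 * e)) / 2 < 0 := by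
  have : b < √(b ^ 2 + 4 * e) := Real.lt_sqrt_of_sq_lt (by linarith)
  linarith

theorem one_lt_add_sqrt_sq_add_div_two {b e : ℝ} (h : 1 < b + e) :
    1 < (b + √(b ^ 2 + 4 * e)) / 2 := by
  have : 2 - b < √(b ^ 2 + 4 * e) := Real.lt_sqrt_of_sq_lt (by nlinarith)
  linarith

theorem rpow_one_sub_eq_rpow_neg_mul {x : ℝ} (hx : x ≠ 0) (δ : ℝ) : x ^ (1 - δ) = x ^ (-δ) * x := by
  rw [sub_eq_neg_add, Real.rpow_add_one hx]

section SmoothFit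

variable {δ1 δ2 γ r s : ℝ}

theorem ne_zero_of_smooth_fit (hδ1 : δ1 ≠ 0) (hδ2 : δ2 ≠ 0) (hγ : γ ≠ 0)
    (hr : γ * (1 - δ2) * r = -δ2) (hs : (δ1 - 1) * s = δ1 * γ) : r ≠ 0 ∧ s ≠ 0 := by
  constructor <;> rintro rfl
  · exact hδ2 (by linarith)
  · exact mul_ne_zero hδ1 hγ (by linarith)

variable (hδ1 : δ1 ≠ 0) (hδ2 : δ2 ≠ 0) (hγ : γ ≠ 0) (hδ : δ1 ≠ δ2)
  (hr : γ * (1 - δ2) * r = -δ2) (hs : (δ1 - 1) * s = δ1 * γ)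
include hδ1 hδ2 hγ hδ hr hs

theorem smooth_fit_fst :
    ((1 - δ2) * s ^ (1 - δ1) + δ2 * r ^ (-δ1)) / (δ1 - δ2)
      + γ * (δ2 * s ^ (-δ1) + (1 - δ2) * r ^ (1 - δ1)) / (δ1 - δ2)
      - s ^ (1 - δ1) / δ1 = 0 := by
  obtain ⟨hr0, hs0⟩ := ne_zero_of_smooth_fit hδ1 hδ2 hγ hr hs
  rw [rpow_one_sub_eq_rpow_neg_mul hr0, rpow_one_sub_eq_rpow_neg_mul hs0]
  have : δ1 - δ2 ≠ 0 := sub_ne_zero.2 hδ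
  field_simp
  linear_combination δ1 * r ^ (-δ1) * hr - δ2 * s ^ (-δ1) * hs

theorem smooth_fit_snd :
    ((1 - δ1) * s ^ (1 - δ2) + δ1 * r ^ (-δ2)) / (δ1 - δ2)
      + γ * (δ1 * s ^ (-δ2) + (1 - δ1) * r ^ (1 - δ2)) / (δ1 - δ2)
      - γ * r ^ (1 - δ2) / (-δ2) = 0 := by
  obtain ⟨hr0, hs0⟩ := ne_zero_of_smooth_fit hδ1 hδ2 hγ hr hs
  rw [rpow_one_sub_eq_rpow_neg_mul hr0, rpow_one_sub_eq_rpow_neg_mul hs0]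
  have : δ1 - δ2 ≠ 0 := sub_ne_zero.2 hδ
  field_simp
  linear_combination δ1 * r ^ (-δ2) * hr - δ2 * s ^ (-δ2) * hs

end SmoothFit

/-- with γ = βb/βs, k1 = (βs/βb)·(−δ2)/(1−δ2) and
k4 = (δ1/(δ1−1))·(βb/βs), the pair (k1, k4) solves the system F1 = F2 = 0 where
F1(r,s) = [(1−δ2)s^{1−δ1} + δ2 r^{−δ1}]/(δ1−δ2) + γ[δ2 s^{−δ1} + (1−δ2) r^{1−δ1}]/(δ1−δ2)
  − k4^{1−δ1}/δ1,
F2(r,s) = [(1−δ1)s^{1−δ2} + δ1 r^{−δ2}]/(δ1−δ2) + γ[δ1 s^{−δ2} + (1−δ1) r^{1−δ2}]/(δ1−δ2)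
  − γ·k1^{1−δ2}/(−δ2). -/
theorem stmt_19 (lam ρ μ1 μ2 δ1 δ2 βs βb γ k1 k4 : ℝ)
    (hlam : 0 < lam) (hμ1 : μ1 < ρ) (hμ2 : μ2 < ρ)
    (hβs : 0 < βs) (hβ : βs < βb)
    (hδ1 : δ1 = (1 + (μ1 - μ2) / lam
      + Real.sqrt ((1 + (μ1 - μ2) / lam) ^ 2 + 4 * (ρ - μ1) / lam)) / 2)
    (hδ2 : δ2 = (1 + (μ1 - μ2) / lam
      - Real.sqrt ((1 + (μ1 - μ2) / lam) ^ 2 + 4 * (ρ - μ1) / lam)) / 2)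
    (hγ : γ = βb / βs)
    (hk1 : k1 = (βs / βb) * (-δ2) / (1 - δ2))
    (hk4 : k4 = (δ1 / (δ1 - 1)) * (βb / βs))
    (F1 F2 : ℝ → ℝ → ℝ)
    (hF1 : F1 = fun r s : ℝ =>
      ((1 - δ2) * s ^ (1 - δ1) + δ2 * r ^ (-δ1)) / (δ1 - δ2)
        + γ * (δ2 * s ^ (-δ1) + (1 - δ2) * r ^ (1 - δ1)) / (δ1 - δ2)
        - k4 ^ (1 - δ1) / δ1)
    (hF2 : F2 = fun r s : ℝ =>
      ((1 - δ1) * s ^ (1 - δ2) + δ1 * r ^ (-δ2)) / (δ1 - δ2)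
        + γ * (δ1 * s ^ (-δ2) + (1 - δ1) * r ^ (1 - δ2)) / (δ1 - δ2)
        - γ * k1 ^ (1 - δ2) / (-δ2)) :
    F1 k1 k4 = 0 ∧ F2 k1 k4 = 0 := by
  rw [mul_div_assoc] at hδ1 hδ2
  have hδ2_neg : δ2 < 0 := hδ2 ▸ sub_sqrt_sq_add_div_two_neg (div_pos (sub_pos.2 hμ1) hlam)
  have hδ1_gt : 1 < δ1 := hδ1 ▸ one_lt_add_sqrt_sq_add_div_two (by
    have : 0 < (ρ - μ2) / lam := div_pos (sub_pos.2 hμ2) hlam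
    linarith [show (ρ - μ2) / lam = (μ1 - μ2) / lam + (ρ - μ1) / lam by ring])
  have hβb : 0 < βb := hβs.trans hβ
  have hγ0 : γ ≠ 0 := by rw [hγ]; positivity
  have hk1' : γ * (1 - δ2) * k1 = -δ2 := by
    rw [hk1, hγ]; field_simp [show 1 - δ2 ≠ 0 by linarith]
  have hk4' : (δ1 - 1) * k4 = δ1 * γ := by
    rw [hk4, hγ]; field_simp [show δ1 - 1 ≠ 0 by linarith]
  subst hF1 hF2
  have hδ1_ne : δ1 ≠ 0 := by linarith
  have hδ2_ne : δ2 ≠ 0 := hδ2_neg.ne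
  have hδ_ne : δ1 ≠ δ2 := by linarith
  exact ⟨smooth_fit_fst hδ1_ne hδ2_ne hγ0 hδ_ne hk1' hk4',
    smooth_fit_snd hδ1_ne hδ2_ne hγ0 hδ_ne hk1' hk4'⟩
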